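/- Let γ > 0 and let K be an m×n real matrix such that γ(A − BK) is Schur stable. Let P̃ be a symmetric positive definite matrix satisfying γ²(A − BK)ᵀP̃(A − BK) − P̃ + Q + KᵀRK = 0, set K₊ = (BᵀP̃B + (1/γ²)R)⁻¹BᵀP̃A, and let P̄ be a real symmetric matrix satisfying γ²(A − BK₊)ᵀP̄(A − BK₊) − P̄ + Q + K₊ᵀRK₊ = 0. Then P̄ is positive definite and P̄ ≤ P̃. -/

import Mathlib

/-!
Write `M = γ (A - B K₊)` and `G = γ² Bᵀ P̃ B + R`. Since `G K₊ = γ² Bᵀ P̃ A`, completing the square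
in the gain turns the equation for `P̃` into `Mᵀ P̃ M - P̃ + Q + K₊ᵀ R K₊ + E = 0` with
`E = (K - K₊)ᵀ G (K - K₊) ≥ 0`. If `M v = μ v` with `|μ| ≥ 1`, this gives
`(|μ|² - 1) v* P̃ v + v* (Q + K₊ᵀ R K₊ + E) v = 0`, a sum of two nonnegative terms, so
`Q v = 0` and `K₊ v = 0`; then `v` is an eigenvector of `A` in the kernel of `Q`, and
observability forces `v = 0`. Hence `M` is Schur stable, and `P̄` and `P̃ - P̄` are the
convergent series `∑ₖ (Mᵏ)ᵀ S Mᵏ` for `S = Q + K₊ᵀ R K₊` and `S = E`; observability again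
makes the first one definite.
-/

open Matrix

/-- A real square matrix is Schur stable if every eigenvalue of it, viewed as a
complex matrix, has modulus strictly less than `1`. -/
def SchurStable {n : ℕ} (M : Matrix (Fin n) (Fin n) ℝ) : Prop :=
  ∀ μ ∈ spectrum ℂ (M.map (algebraMap ℝ ℂ)), ‖μ‖ < 1

open Filter Topology Finset
open scoped ComplexOrder MatrixOrder

def Observable {ι R : Type*} [Fintype ι] [DecidableEq ι] [Semiring R] (A C : Matrix ι ι R) :
    Prop :=
  ∀ x : ι → R, (∀ k : ℕ, C *ᵥ (A ^ k *ᵥ x) = 0) → x = 0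

theorem tendsto_pow_atTop_nhds_zero_of_spectralRadius_lt_one {A : Type*} [NormedRing A]
    [NormedAlgebra ℂ A] [CompleteSpace A] {a : A} (ha : spectralRadius ℂ a < 1) :
    Tendsto (a ^ ·) atTop (𝓝 0) := by
  obtain ⟨r, hρr, hr1⟩ := ENNReal.lt_iff_exists_nnreal_btwn.mp ha
  have hgelfand := spectrum.pow_nnnorm_pow_one_div_tendsto_nhds_spectralRadius a
  have hbound : ∀ᶠ k : ℕ in atTop, ‖a ^ k‖ ≤ (r : ℝ) ^ k := by
    filter_upwards [hgelfand.eventually_lt_const hρr, eventually_ge_atTop 1] with k hk hk1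
    have hkpos : (0 : ℝ) < k := by exact_mod_cast hk1
    have := ENNReal.rpow_lt_rpow hk hkpos
    rw [← ENNReal.rpow_mul, one_div_mul_cancel hkpos.ne', ENNReal.rpow_one,
      ENNReal.rpow_natCast, ← ENNReal.coe_pow, ENNReal.coe_lt_coe] at this
    exact_mod_cast this.le
  exact squeeze_zero_norm' hbound
    (tendsto_pow_atTop_nhds_zero_of_lt_one r.coe_nonneg (by exact_mod_cast hr1))

namespace SchurStable

variable {n : ℕ} {M : Matrix (Fin n) (Fin n) ℝ}

theorem spectralRadius_lt_one (hM : SchurStable M) :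
    spectralRadius ℂ (M.map (algebraMap ℝ ℂ)) < 1 := by
  let _ := Matrix.linftyOpNormedRing (n := Fin n) (α := ℂ)
  let _ := Matrix.linftyOpNormedAlgebra (n := Fin n) (R := ℂ) (α := ℂ)
  rcases (spectrum ℂ (M.map (algebraMap ℝ ℂ))).eq_empty_or_nonempty with he | hne
  · rw [spectralRadius, he]
    simp
  · obtain ⟨μ, hμ, hρ⟩ := spectrum.exists_nnnorm_eq_spectralRadius_of_nonempty hne
    rw [← hρ]
    exact_mod_cast hM μ hμ

theorem tendsto_pow (hM : SchurStable M) : Tendsto (fun k : ℕ => M ^ k) atTop (𝓝 0) := by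
  let _ := Matrix.linftyOpNormedRing (n := Fin n) (α := ℂ)
  let _ := Matrix.linftyOpNormedAlgebra (n := Fin n) (R := ℂ) (α := ℂ)
  have hC := tendsto_pow_atTop_nhds_zero_of_spectralRadius_lt_one hM.spectralRadius_lt_one
  have hre : Continuous fun N : Matrix (Fin n) (Fin n) ℂ => N.map Complex.re :=
    continuous_id.matrix_map Complex.continuous_re
  have hpow (k : ℕ) : (M.map (algebraMap ℝ ℂ) ^ k).map Complex.re = M ^ k := by
    rw [← RingHom.mapMatrix_apply, ← map_pow, RingHom.mapMatrix_apply, Matrix.map_map]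
    ext
    simp
  convert (hre.tendsto 0).comp hC using 1
  · exact funext fun k => (hpow k).symm
  · simp

end SchurStable

theorem Matrix.dotProduct_transpose_mul_mul_mulVec {ι κ R : Type*} [Fintype ι] [Fintype κ]
    [CommSemiring R] (K : Matrix κ ι R) (P : Matrix κ κ R) (y : ι → R) :
    y ⬝ᵥ (Kᵀ * P * K) *ᵥ y = (K *ᵥ y) ⬝ᵥ P *ᵥ (K *ᵥ y) := by
  rw [← mulVec_mulVec, ← mulVec_mulVec, dotProduct_mulVec, vecMul_transpose]

theorem Matrix.transpose_smul_mul_mul_smul {ι κ R : Type*} [Fintype ι] [CommSemiring R] (c : R)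
    (X : Matrix ι κ R) (P : Matrix ι ι R) :
    (c • X)ᵀ * P * (c • X) = c ^ 2 • (Xᵀ * P * X) := by
  rw [transpose_smul, Matrix.smul_mul, Matrix.smul_mul, Matrix.mul_smul, smul_smul, sq]

theorem Matrix.closedLoop_cost_completeSquare {ι κ R : Type*} [Fintype ι] [Fintype κ]
    [CommRing R] (c : R) {A P : Matrix ι ι R} {B : Matrix ι κ R} {W : Matrix κ κ R}
    {K' : Matrix κ ι R} (hP : Pᵀ = P) (hW : Wᵀ = W)
    (hK' : (c • (Bᵀ * P * B) + W) * K' = c • (Bᵀ * P * A)) (K : Matrix κ ι R) :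
    c • ((A - B * K)ᵀ * P * (A - B * K)) + Kᵀ * W * K
      = c • ((A - B * K')ᵀ * P * (A - B * K')) + K'ᵀ * W * K'
        + (K - K')ᵀ * (c • (Bᵀ * P * B) + W) * (K - K') := by
  have hK'G : K'ᵀ * (c • (Bᵀ * P * B) + W) = c • (Aᵀ * P * B) := by
    have hGT : (c • (Bᵀ * P * B) + W)ᵀ = c • (Bᵀ * P * B) + W := by
      rw [transpose_add, transpose_smul, transpose_mul, transpose_mul, transpose_transpose, hP, hW,
        Matrix.mul_assoc]
    rw [← hGT, ← transpose_mul, hK', transpose_smul, transpose_mul, transpose_mul, hP,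
      transpose_transpose, Matrix.mul_assoc]
  rw [← sub_eq_zero]
  calc _ = -((K' - K)ᵀ * ((c • (Bᵀ * P * B) + W) * K' - c • (Bᵀ * P * A))
        + (K'ᵀ * (c • (Bᵀ * P * B) + W) - c • (Aᵀ * P * B)) * (K' - K)) := by
        simp only [transpose_sub, transpose_mul, Matrix.sub_mul, Matrix.mul_sub, Matrix.add_mul,
          Matrix.mul_add, Matrix.smul_mul, Matrix.mul_smul, smul_sub, Matrix.mul_assoc]
        abel
    _ = 0 := by
      rw [hK', hK'G, sub_self, sub_self, Matrix.mul_zero, Matrix.zero_mul, add_zero, neg_zero]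

theorem Matrix.PosSemidef.add_mulVec_eq_zero_iff {ι 𝕜 : Type*} [Fintype ι] [RCLike 𝕜]
    {S E : Matrix ι ι 𝕜} (hS : S.PosSemidef) (hE : E.PosSemidef) (y : ι → 𝕜) :
    (S + E) *ᵥ y = 0 ↔ S *ᵥ y = 0 ∧ E *ᵥ y = 0 := by
  refine ⟨fun h => ?_, fun ⟨hSy, hEy⟩ => by rw [add_mulVec, hSy, hEy, add_zero]⟩
  have hsum : star y ⬝ᵥ S *ᵥ y + star y ⬝ᵥ E *ᵥ y = 0 := by
    rw [← dotProduct_add, ← add_mulVec, h, dotProduct_zero]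
  obtain ⟨hSy, hEy⟩ := (add_eq_zero_iff_of_nonneg (hS.dotProduct_mulVec_nonneg y)
    (hE.dotProduct_mulVec_nonneg y)).mp hsum
  exact ⟨(hS.dotProduct_mulVec_zero_iff y).mp hSy, (hE.dotProduct_mulVec_zero_iff y).mp hEy⟩

theorem Matrix.PosSemidef.transpose_mul_mul_same {ι κ : Type*} [Fintype ι] [Fintype κ]
    {S : Matrix κ κ ℝ} (hS : S.PosSemidef) (K : Matrix κ ι ℝ) : (Kᵀ * S * K).PosSemidef := by
  simpa only [conjTranspose_eq_transpose_of_trivial] using hS.conjTranspose_mul_mul_same K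

theorem Matrix.PosDef.transpose_mul_mul_mulVec_eq_zero_iff {ι κ : Type*} [Fintype ι] [Fintype κ]
    {W : Matrix κ κ ℝ} (hW : W.PosDef) (K : Matrix κ ι ℝ) (y : ι → ℝ) :
    (Kᵀ * W * K) *ᵥ y = 0 ↔ K *ᵥ y = 0 := by
  refine ⟨fun h => ?_, fun h => by rw [← mulVec_mulVec, h, mulVec_zero]⟩
  by_contra hKy
  have hpos := hW.dotProduct_mulVec_pos hKy
  rw [star_trivial, ← dotProduct_transpose_mul_mul_mulVec, h, dotProduct_zero] at hpos
  exact hpos.false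

theorem Matrix.re_map_algebraMap_mulVec {ι κ : Type*} [Fintype κ] (N : Matrix ι κ ℝ) (v : κ → ℂ)
    (i : ι) : ((N.map (algebraMap ℝ ℂ) *ᵥ v) i).re = (N *ᵥ fun j => (v j).re) i := by
  simp [mulVec, dotProduct, Complex.re_sum]

theorem Matrix.im_map_algebraMap_mulVec {ι κ : Type*} [Fintype κ] (N : Matrix ι κ ℝ) (v : κ → ℂ)
    (i : ι) : ((N.map (algebraMap ℝ ℂ) *ᵥ v) i).im = (N *ᵥ fun j => (v j).im) i := by
  simp [mulVec, dotProduct, Complex.im_sum]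

namespace Observable

variable {ι : Type*} [Fintype ι] [DecidableEq ι]

theorem add {M S E : Matrix ι ι ℝ} (h : Observable M S) (hS : S.PosSemidef)
    (hE : E.PosSemidef) : Observable M (S + E) :=
  fun x hx => h x fun k => ((hS.add_mulVec_eq_zero_iff hE _).mp (hx k)).1

theorem closedLoop {κ : Type*} [Fintype κ] {A Q : Matrix ι ι ℝ} {B : Matrix ι κ ℝ}
    {W : Matrix κ κ ℝ} (h : Observable A Q) (hQ : Q.PosSemidef) (hW : W.PosDef)
    (K : Matrix κ ι ℝ) {γ : ℝ} (hγ : γ ≠ 0) : Observable (γ • (A - B * K)) (Q + Kᵀ * W * K) := by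
  intro x hx
  have hzero (k : ℕ) :=
    (hQ.add_mulVec_eq_zero_iff (hW.posSemidef.transpose_mul_mul_same K) _).mp (hx k)
  -- the feedback term vanishes along the trajectory, which is therefore that of `γ A`
  have hpow (k : ℕ) : (γ • (A - B * K)) ^ k *ᵥ x = γ ^ k • (A ^ k *ᵥ x) := by
    induction k with
    | zero => simp
    | succ k ih =>
      have hK := (hW.transpose_mul_mul_mulVec_eq_zero_iff K _).mp (hzero k).2
      rw [pow_succ', ← mulVec_mulVec, smul_mulVec, sub_mulVec, ← mulVec_mulVec, hK,
        mulVec_zero, sub_zero, ih, mulVec_smul, mulVec_mulVec, ← pow_succ', smul_smul, ← pow_succ']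
  refine h x fun k => ?_
  have hQk := (hzero k).1
  rw [hpow, mulVec_smul] at hQk
  exact (smul_eq_zero.mp hQk).resolve_left (pow_ne_zero k hγ)

theorem map_algebraMap {M S : Matrix ι ι ℝ} (h : Observable M S) :
    Observable (M.map (algebraMap ℝ ℂ)) (S.map (algebraMap ℝ ℂ)) := by
  intro v hv
  have hv' (k : ℕ) : (S * M ^ k).map (algebraMap ℝ ℂ) *ᵥ v = 0 := by
    rw [← RingHom.mapMatrix_apply, map_mul, map_pow, RingHom.mapMatrix_apply, ← mulVec_mulVec]
    exact hv k
  have hre := h (fun j => (v j).re) fun k => by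
    funext i
    rw [mulVec_mulVec, ← re_map_algebraMap_mulVec, hv' k, Pi.zero_apply, Complex.zero_re]; rfl
  have him := h (fun j => (v j).im) fun k => by
    funext i
    rw [mulVec_mulVec, ← im_map_algebraMap_mulVec, hv' k, Pi.zero_apply, Complex.zero_im]; rfl
  funext i
  exact Complex.ext (congrFun hre i) (congrFun him i)

end Observable

section Lyapunov

variable {ι : Type*} [Fintype ι] [DecidableEq ι]

theorem quadForm_eq_of_lyapunov {R : Type*} [CommRing R] {M P S : Matrix ι ι R}
    (h : Mᵀ * P * M - P + S = 0) (x : ι → R) (N : ℕ) :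
    x ⬝ᵥ P *ᵥ x = (M ^ N *ᵥ x) ⬝ᵥ P *ᵥ (M ^ N *ᵥ x)
      + ∑ k ∈ range N, (M ^ k *ᵥ x) ⬝ᵥ S *ᵥ (M ^ k *ᵥ x) := by
  have hstep (y : ι → R) : y ⬝ᵥ P *ᵥ y = (M *ᵥ y) ⬝ᵥ P *ᵥ (M *ᵥ y) + y ⬝ᵥ S *ᵥ y := by
    have hP : P = Mᵀ * P * M + S := by rw [← sub_eq_zero, ← neg_eq_zero, ← h]; abel
    conv_lhs => rw [hP]
    rw [add_mulVec, dotProduct_add, dotProduct_transpose_mul_mul_mulVec]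
  induction N with
  | zero => simp
  | succ N ih =>
    rw [ih, hstep (M ^ N *ᵥ x), sum_range_succ, pow_succ', ← mulVec_mulVec]
    ring

variable {M P S : Matrix ι ι ℝ}

theorem hasSum_quadForm_of_lyapunov (hM : Tendsto (fun k : ℕ => M ^ k) atTop (𝓝 0))
    (hS : S.PosSemidef) (h : Mᵀ * P * M - P + S = 0) (x : ι → ℝ) :
    HasSum (fun k => (M ^ k *ᵥ x) ⬝ᵥ S *ᵥ (M ^ k *ᵥ x)) (x ⬝ᵥ P *ᵥ x) := by
  refine (hasSum_iff_tendsto_nat_of_nonneg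
    (fun k => by simpa only [star_trivial] using hS.dotProduct_mulVec_nonneg _) _).mpr ?_
  have hq : Continuous fun T : Matrix ι ι ℝ => (T *ᵥ x) ⬝ᵥ P *ᵥ (T *ᵥ x) := by fun_prop
  have hrem := (hq.tendsto 0).comp hM
  simp only [zero_mulVec, zero_dotProduct] at hrem
  convert (tendsto_const_nhds (x := x ⬝ᵥ P *ᵥ x)).sub hrem using 1
  · funext N
    rw [quadForm_eq_of_lyapunov h x N]
    simp
  · simp

theorem posSemidef_of_lyapunov (hM : Tendsto (fun k : ℕ => M ^ k) atTop (𝓝 0))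
    (hS : S.PosSemidef) (h : Mᵀ * P * M - P + S = 0) (hP : P.IsHermitian) : P.PosSemidef :=
  .of_dotProduct_mulVec_nonneg hP fun x => by
    simpa using (hasSum_quadForm_of_lyapunov hM hS h x).nonneg
      fun k => by simpa only [star_trivial] using hS.dotProduct_mulVec_nonneg _

theorem posDef_of_lyapunov (hM : Tendsto (fun k : ℕ => M ^ k) atTop (𝓝 0))
    (hS : S.PosSemidef) (h : Mᵀ * P * M - P + S = 0) (hP : P.IsHermitian)
    (hobs : Observable M S) : P.PosDef := by
  refine .of_dotProduct_mulVec_pos hP fun x hx => ?_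
  simp only [star_trivial]
  refine (by simpa only [star_trivial] using
    (posSemidef_of_lyapunov hM hS h hP).dotProduct_mulVec_nonneg x : 0 ≤ x ⬝ᵥ P *ᵥ x).lt_of_ne' ?_
  intro h0
  have hsum := hasSum_quadForm_of_lyapunov hM hS h x
  rw [h0, hasSum_zero_iff_of_nonneg fun k => by
    simpa only [star_trivial] using hS.dotProduct_mulVec_nonneg _] at hsum
  refine hx (hobs x fun k => (hS.dotProduct_mulVec_zero_iff _).mp ?_)
  simpa only [star_trivial, Pi.zero_apply] using congrFun hsum k

end Lyapunov

theorem Matrix.PosSemidef.map_algebraMap {ι : Type*} [Fintype ι] {S : Matrix ι ι ℝ}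
    (hS : S.PosSemidef) : (S.map (algebraMap ℝ ℂ)).PosSemidef := by
  classical
  obtain ⟨B, rfl⟩ := CStarAlgebra.nonneg_iff_eq_star_mul_self.mp hS.nonneg
  rw [Matrix.map_mul, star_eq_conjTranspose, conjTranspose_map _ fun x => by simp]
  exact posSemidef_conjTranspose_mul_self _

theorem Matrix.mulVec_eq_zero_of_lyapunov_of_one_le_norm {ι : Type*} [Fintype ι]
    {M P S : Matrix ι ι ℂ} (hP : P.PosSemidef) (hS : S.PosSemidef) (h : Mᴴ * P * M - P + S = 0)
    {v : ι → ℂ} {μ : ℂ} (hv : M *ᵥ v = μ • v) (hμ : 1 ≤ ‖μ‖) : S *ᵥ v = 0 := by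
  have hquad : star v ⬝ᵥ (Mᴴ * P * M) *ᵥ v = (‖μ‖ ^ 2 : ℂ) * (star v ⬝ᵥ P *ᵥ v) := by
    rw [← mulVec_mulVec, ← mulVec_mulVec, dotProduct_mulVec, ← star_mulVec, hv, star_smul,
      mulVec_smul, smul_dotProduct, dotProduct_smul, smul_smul, smul_eq_mul, ← Complex.conj_mul']
    rfl
  have hsplit : star v ⬝ᵥ S *ᵥ v + ((‖μ‖ ^ 2 - 1 : ℝ) : ℂ) * (star v ⬝ᵥ P *ᵥ v) = 0 := by
    have := congrArg (fun N => star v ⬝ᵥ N *ᵥ v) h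
    simp only [add_mulVec, sub_mulVec, dotProduct_add, dotProduct_sub, hquad, zero_mulVec,
      dotProduct_zero] at this
    push_cast
    linear_combination this
  have hc : (0 : ℂ) ≤ ((‖μ‖ ^ 2 - 1 : ℝ) : ℂ) := by
    exact_mod_cast (by nlinarith : (0 : ℝ) ≤ ‖μ‖ ^ 2 - 1)
  refine (hS.dotProduct_mulVec_zero_iff v).mp ?_
  exact ((add_eq_zero_iff_of_nonneg (hS.dotProduct_mulVec_nonneg v)
    (mul_nonneg hc (hP.dotProduct_mulVec_nonneg v))).mp hsplit).1

theorem schurStable_of_lyapunov {n : ℕ} {M P S : Matrix (Fin n) (Fin n) ℝ} (hP : P.PosSemidef)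
    (hS : S.PosSemidef) (h : Mᵀ * P * M - P + S = 0) (hobs : Observable M S) :
    SchurStable M := by
  intro μ hμ
  by_contra! hμ1
  rw [← spectrum_toLin', ← Module.End.hasEigenvalue_iff_mem_spectrum] at hμ
  obtain ⟨v, hv⟩ := hμ.exists_hasEigenvector
  have hC : (M.map (algebraMap ℝ ℂ))ᴴ * P.map (algebraMap ℝ ℂ) * M.map (algebraMap ℝ ℂ)
      - P.map (algebraMap ℝ ℂ) + S.map (algebraMap ℝ ℂ) = 0 := by
    rw [← conjTranspose_eq_transpose_of_trivial] at h
    simpa only [RingHom.mapMatrix_apply, map_add, map_sub, map_mul, map_zero,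
      conjTranspose_map (algebraMap ℝ ℂ) fun x => by simp] using
      congrArg (algebraMap ℝ ℂ).mapMatrix h
  have hSv := mulVec_eq_zero_of_lyapunov_of_one_le_norm hP.map_algebraMap hS.map_algebraMap hC
    (by simpa using hv.apply_eq_smul) hμ1
  have hpow (k : ℕ) : M.map (algebraMap ℝ ℂ) ^ k *ᵥ v = μ ^ k • v := by
    simpa [← Matrix.toLin'_pow] using hv.pow_apply k
  exact hv.2 (hobs.map_algebraMap v fun k => by rw [hpow, mulVec_smul, hSv, smul_zero])

theorem stmt_13_general {n m : ℕ}
    (A : Matrix (Fin n) (Fin n) ℝ) (B : Matrix (Fin n) (Fin m) ℝ)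
    (Q : Matrix (Fin n) (Fin n) ℝ) (R : Matrix (Fin m) (Fin m) ℝ)
    (hQ : Q.PosSemidef) (hR : R.PosDef)
    (hObs : ∀ x : Fin n → ℝ, (∀ k : ℕ, Q.mulVec ((A ^ k).mulVec x) = 0) → x = 0)
    (γ : ℝ) (hγ : 0 < γ)
    (K : Matrix (Fin m) (Fin n) ℝ)
    (Ptil : Matrix (Fin n) (Fin n) ℝ) (hPtil : Ptil.PosDef)
    (hPtilEq : γ ^ 2 • ((A - B * K)ᵀ * Ptil * (A - B * K)) - Ptil + Q + Kᵀ * R * K = 0)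
    (Kplus : Matrix (Fin m) (Fin n) ℝ)
    (hKplus : Kplus = (Bᵀ * Ptil * B + (1 / γ ^ 2) • R)⁻¹ * (Bᵀ * Ptil * A))
    (Pbar : Matrix (Fin n) (Fin n) ℝ) (hPbarSymm : Pbar.IsSymm)
    (hPbarEq : γ ^ 2 • ((A - B * Kplus)ᵀ * Pbar * (A - B * Kplus)) - Pbar + Q
        + Kplusᵀ * R * Kplus = 0) :
    Pbar.PosDef ∧ (Ptil - Pbar).PosSemidef := by
  have hBPB := hPtil.posSemidef.transpose_mul_mul_same B
  have hGain : (γ ^ 2 • (Bᵀ * Ptil * B) + R) * Kplus = γ ^ 2 • (Bᵀ * Ptil * A) := by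
    have hH : (Bᵀ * Ptil * B + (1 / γ ^ 2) • R).PosDef :=
      .posSemidef_add hBPB (hR.smul (by positivity))
    have hG : γ ^ 2 • (Bᵀ * Ptil * B + (1 / γ ^ 2) • R) = γ ^ 2 • (Bᵀ * Ptil * B) + R := by
      rw [smul_add, smul_smul, mul_one_div_cancel (pow_ne_zero 2 hγ.ne'), one_smul]
    rw [← hG, hKplus, Matrix.smul_mul,
      mul_nonsing_inv_cancel_left _ _ ((isUnit_iff_isUnit_det _).mp hH.isUnit)]
  have hcost := closedLoop_cost_completeSquare (γ ^ 2)
    (isHermitian_iff_isSymm.mp hPtil.isHermitian).eq (isHermitian_iff_isSymm.mp hR.isHermitian).eq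
    hGain K
  set S := Q + Kplusᵀ * R * Kplus with hS_def
  set E := (K - Kplus)ᵀ * (γ ^ 2 • (Bᵀ * Ptil * B) + R) * (K - Kplus)
  have hS : S.PosSemidef := hQ.add (hR.posSemidef.transpose_mul_mul_same Kplus)
  have hE : E.PosSemidef :=
    ((hBPB.smul (by positivity)).add hR.posSemidef).transpose_mul_mul_same (K - Kplus)
  set M := γ • (A - B * Kplus)
  have hLyapTil : Mᵀ * Ptil * M - Ptil + (S + E) = 0 := by
    rw [transpose_smul_mul_mul_smul, hS_def]
    linear_combination (norm := abel) hPtilEq - hcost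
  have hLyapBar : Mᵀ * Pbar * M - Pbar + S = 0 := by
    rw [transpose_smul_mul_mul_smul, hS_def]
    linear_combination (norm := abel) hPbarEq
  have hobs : Observable M S := Observable.closedLoop hObs hQ hR Kplus hγ.ne'
  have hM : SchurStable M :=
    schurStable_of_lyapunov hPtil.posSemidef (hS.add hE) hLyapTil (hobs.add hS hE)
  have hPbar : Pbar.IsHermitian := isHermitian_iff_isSymm.mpr hPbarSymm
  refine ⟨posDef_of_lyapunov hM.tendsto_pow hS hLyapBar hPbar hobs,
    posSemidef_of_lyapunov hM.tendsto_pow hE ?_ (hPtil.isHermitian.sub hPbar)⟩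
  rw [Matrix.mul_sub, Matrix.sub_mul]
  linear_combination (norm := abel) hLyapTil - hLyapBar

theorem stmt_13 {n m : ℕ}
    (A : Matrix (Fin n) (Fin n) ℝ) (B : Matrix (Fin n) (Fin m) ℝ)
    (Q : Matrix (Fin n) (Fin n) ℝ) (R : Matrix (Fin m) (Fin m) ℝ)
    (hQ : Q.PosSemidef) (hR : R.PosDef)
    (hObs : ∀ x : Fin n → ℝ, (∀ k : ℕ, Q.mulVec ((A ^ k).mulVec x) = 0) → x = 0)
    (γ : ℝ) (hγ : 0 < γ)
    (K : Matrix (Fin m) (Fin n) ℝ)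
    (hK : SchurStable (γ • (A - B * K)))
    (Ptil : Matrix (Fin n) (Fin n) ℝ) (hPtil : Ptil.PosDef)
    (hPtilEq : γ ^ 2 • ((A - B * K)ᵀ * Ptil * (A - B * K)) - Ptil + Q + Kᵀ * R * K = 0)
    (Kplus : Matrix (Fin m) (Fin n) ℝ)
    (hKplus : Kplus = (Bᵀ * Ptil * B + (1 / γ ^ 2) • R)⁻¹ * (Bᵀ * Ptil * A))
    (Pbar : Matrix (Fin n) (Fin n) ℝ) (hPbarSymm : Pbar.IsSymm)
    (hPbarEq : γ ^ 2 • ((A - B * Kplus)ᵀ * Pbar * (A - B * Kplus)) - Pbar + Q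
        + Kplusᵀ * R * Kplus = 0) :
    Pbar.PosDef ∧ (Ptil - Pbar).PosSemidef :=
  stmt_13_general A B Q R hQ hR hObs γ hγ K Ptil hPtil hPtilEq Kplus hKplus Pbar hPbarSymm hPbarEq
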